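/- Let α ∈ (0,1), c, d ∈ [0,1], π = (α, 1−α)ᵀ, and let P be any 2×2 row-stochastic matrix with stationary distribution π. Set C = [[c, 1−c],[d, 1−d]] and define Q by diag(Cᵀπ) Q = Cᵀ diag(π) P C (assuming Cᵀπ has positive entries). Then the matrix X = [[x, 1−x],[y, 1−y]] with x = 2d − c + 2αc − 2αd and y = d + 2αc − 2αd also satisfies Xᵀ diag(π) P X = diag(Xᵀπ) Q, provided Xᵀπ has the needed positivity. -/

import Mathlib

/-!
For a two-state chain the flow matrix `F = diag(π) P` has row sums and column sums both equal
to `π = (α, 1 - α)`. Such a matrix is preserved, `Rᵀ F R = F`, by the reflection `R = I - 2 w vᵀ`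
with `w = (1 - α, -α)` and `v = (1, -1)`, which also fixes `π`. Since `R` has unit row sums and
`X = R C`, both sides of the equation for `X` coincide with those for `C`.
-/

open Matrix

def stationaryReflection (α : ℝ) : Matrix (Fin 2) (Fin 2) ℝ :=
  !![2 * α - 1, 2 - 2 * α; 2 * α, 1 - 2 * α]

theorem stationaryReflection_transpose_mulVec (α : ℝ) :
    (stationaryReflection α)ᵀ *ᵥ ![α, 1 - α] = ![α, 1 - α] := by
  ext i
  fin_cases i <;> simp [stationaryReflection, mulVec, dotProduct, Fin.sum_univ_two] <;> ring

theorem stationaryReflection_mul (α c d : ℝ) :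
    stationaryReflection α * !![c, 1 - c; d, 1 - d]
      = !![2 * d - c + 2 * α * c - 2 * α * d, 1 - (2 * d - c + 2 * α * c - 2 * α * d);
          d + 2 * α * c - 2 * α * d, 1 - (d + 2 * α * c - 2 * α * d)] := by
  ext i j
  fin_cases i <;> fin_cases j <;> simp [stationaryReflection, mul_apply, Fin.sum_univ_two] <;> ring

theorem stationaryReflection_transpose_mul_mul_self {α : ℝ} {F : Matrix (Fin 2) (Fin 2) ℝ}
    (hrow : F *ᵥ 1 = ![α, 1 - α]) (hcol : Fᵀ *ᵥ 1 = ![α, 1 - α]) :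
    (stationaryReflection α)ᵀ * F * stationaryReflection α = F := by
  have hrow0 := congrFun hrow 0
  have hrow1 := congrFun hrow 1
  have hcol0 := congrFun hcol 0
  simp [mulVec, dotProduct, Fin.sum_univ_two] at hrow0 hrow1 hcol0
  -- the margins leave a single free entry, and force `F` to be symmetric
  have h01 : F 0 1 = α - F 0 0 := by linarith
  have h10 : F 1 0 = α - F 0 0 := by linarith
  have h11 : F 1 1 = 1 - 2 * α + F 0 0 := by linarith
  ext i j
  fin_cases i <;> fin_cases j <;>
    simp [stationaryReflection, mul_apply, Fin.sum_univ_two, h01, h10, h11] <;> ring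

theorem diagonal_mul_mulVec_one {n R : Type*} [Fintype n] [DecidableEq n] [CommSemiring R]
    {P : Matrix n n R} (hP : ∀ i, ∑ j, P i j = 1) (π : n → R) : (diagonal π * P) *ᵥ 1 = π := by
  ext i
  simp [mulVec, dotProduct, ← Finset.mul_sum, hP]

theorem diagonal_mul_transpose_mulVec_one {n R : Type*} [Fintype n] [DecidableEq n]
    [CommSemiring R] (P : Matrix n n R) (π : n → R) : (diagonal π * P)ᵀ *ᵥ 1 = Pᵀ *ᵥ π := by
  rw [transpose_mul, diagonal_transpose, ← mulVec_mulVec]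
  congr 1
  ext i
  simp [mulVec_diagonal]

theorem stmt_3_general (α c d : ℝ)
    (P : Matrix (Fin 2) (Fin 2) ℝ)
    (hProw : ∀ i, ∑ j, P i j = 1)
    (hstat : Pᵀ *ᵥ ![α, 1 - α] = ![α, 1 - α])
    (Q : Matrix (Fin 2) (Fin 2) ℝ)
    (hQ : Matrix.diagonal ((!![c, 1 - c; d, 1 - d] : Matrix (Fin 2) (Fin 2) ℝ)ᵀ *ᵥ ![α, 1 - α]) * Q
        = (!![c, 1 - c; d, 1 - d] : Matrix (Fin 2) (Fin 2) ℝ)ᵀ * Matrix.diagonal ![α, 1 - α] * P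
            * !![c, 1 - c; d, 1 - d])
    (x y : ℝ) (hx : x = 2 * d - c + 2 * α * c - 2 * α * d) (hy : y = d + 2 * α * c - 2 * α * d) :
    (!![x, 1 - x; y, 1 - y] : Matrix (Fin 2) (Fin 2) ℝ)ᵀ * Matrix.diagonal ![α, 1 - α] * P
        * !![x, 1 - x; y, 1 - y]
      = Matrix.diagonal ((!![x, 1 - x; y, 1 - y] : Matrix (Fin 2) (Fin 2) ℝ)ᵀ *ᵥ ![α, 1 - α]) * Q := by
  set C : Matrix (Fin 2) (Fin 2) ℝ := !![c, 1 - c; d, 1 - d]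
  set R := stationaryReflection α
  have hX : !![x, 1 - x; y, 1 - y] = R * C := by
    rw [stationaryReflection_mul, hx, hy]
  have hF : Rᵀ * (diagonal ![α, 1 - α] * P) * R = diagonal ![α, 1 - α] * P :=
    stationaryReflection_transpose_mul_mul_self (diagonal_mul_mulVec_one hProw _)
      ((diagonal_mul_transpose_mulVec_one P _).trans hstat)
  rw [hX, transpose_mul, ← mulVec_mulVec, stationaryReflection_transpose_mulVec, hQ]
  calc Cᵀ * Rᵀ * diagonal ![α, 1 - α] * P * (R * C)
      = Cᵀ * (Rᵀ * (diagonal ![α, 1 - α] * P) * R) * C := by simp only [Matrix.mul_assoc]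
    _ = Cᵀ * diagonal ![α, 1 - α] * P * C := by rw [hF]; simp only [Matrix.mul_assoc]

theorem stmt_3 (α c d : ℝ) (hα : α ∈ Set.Ioo (0:ℝ) 1)
    (hc : c ∈ Set.Icc (0:ℝ) 1) (hd : d ∈ Set.Icc (0:ℝ) 1)
    (P : Matrix (Fin 2) (Fin 2) ℝ)
    (hPnn : ∀ i j, 0 ≤ P i j) (hProw : ∀ i, ∑ j, P i j = 1)
    (hstat : Pᵀ *ᵥ ![α, 1 - α] = ![α, 1 - α])
    (Q : Matrix (Fin 2) (Fin 2) ℝ)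
    (hCpos : ∀ i, 0 < ((!![c, 1 - c; d, 1 - d] : Matrix (Fin 2) (Fin 2) ℝ)ᵀ *ᵥ ![α, 1 - α]) i)
    (hQ : Matrix.diagonal ((!![c, 1 - c; d, 1 - d] : Matrix (Fin 2) (Fin 2) ℝ)ᵀ *ᵥ ![α, 1 - α]) * Q
        = (!![c, 1 - c; d, 1 - d] : Matrix (Fin 2) (Fin 2) ℝ)ᵀ * Matrix.diagonal ![α, 1 - α] * P
            * !![c, 1 - c; d, 1 - d])
    (x y : ℝ) (hx : x = 2 * d - c + 2 * α * c - 2 * α * d) (hy : y = d + 2 * α * c - 2 * α * d)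
    (hXpos : ∀ i, 0 < ((!![x, 1 - x; y, 1 - y] : Matrix (Fin 2) (Fin 2) ℝ)ᵀ *ᵥ ![α, 1 - α]) i) :
    (!![x, 1 - x; y, 1 - y] : Matrix (Fin 2) (Fin 2) ℝ)ᵀ * Matrix.diagonal ![α, 1 - α] * P
        * !![x, 1 - x; y, 1 - y]
      = Matrix.diagonal ((!![x, 1 - x; y, 1 - y] : Matrix (Fin 2) (Fin 2) ℝ)ᵀ *ᵥ ![α, 1 - α]) * Q :=
  stmt_3_general α c d P hProw hstat Q hQ x y hx hy
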